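/- The hazard rate h(x) = f(x)/(1 - F(x)) of the unit-Gompertz distribution satisfies lim_{x→0+} h(x) = 0 and lim_{x→1-} h(x) = +∞. -/

import Mathlib

/-!
With `t = x ^ (-β)`, which tends to `∞` as `x → 0⁺`, the density is `α β e^α t^((1+β)/β) e^(-α t)`,
which tends to `0`, while the cdf `e^α e^(-α t)` tends to `0`; hence `h → 0`. At `1` both the cdf and
the density are continuous, with values `1` and `α β > 0`, and the cdf stays below `1` on `(0, 1)`,
so `1 - F → 0⁺` and `h → ∞`.
-/

open Real Filter Topology

theorem Filter.Tendsto.div_nhdsGT_zero_atTop {𝕜 α : Type*} [Semifield 𝕜] [LinearOrder 𝕜]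
    [IsStrictOrderedRing 𝕜] [TopologicalSpace 𝕜] [OrderTopology 𝕜] {l : Filter α}
    {f g : α → 𝕜} {C : 𝕜} (hC : 0 < C) (hf : Tendsto f l (𝓝 C)) (hg : Tendsto g l (𝓝[>] 0)) :
    Tendsto (fun x => f x / g x) l atTop :=
  (hf.pos_mul_atTop hC hg.inv_tendsto_nhdsGT_zero).congr fun _ => (div_eq_mul_inv _ _).symm

namespace UnitGompertz

noncomputable def cdf (α β x : ℝ) : ℝ := exp (-α * (1 / x ^ β - 1))

noncomputable def pdf (α β x : ℝ) : ℝ := α * β * cdf α β x / x ^ (1 + β)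

variable {α β x : ℝ}

theorem cdf_eq_exp_mul_exp (hx : 0 < x) : cdf α β x = exp α * exp (-α * x ^ (-β)) := by
  rw [cdf, ← exp_add, rpow_neg hx.le, one_div]
  ring_nf

theorem pdf_eq_rpow_mul_exp (hβ : 0 < β) (hx : 0 < x) :
    pdf α β x = α * β * exp α * ((x ^ (-β)) ^ ((1 + β) / β) * exp (-α * x ^ (-β))) := by
  have hpow : (x ^ (-β)) ^ ((1 + β) / β) = (x ^ (1 + β))⁻¹ := by
    rw [← rpow_mul hx.le, ← rpow_neg hx.le]
    congr 1
    field_simp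
  rw [pdf, cdf_eq_exp_mul_exp hx, hpow]
  ring

theorem tendsto_cdf_nhdsGT_zero (hα : 0 < α) (hβ : 0 < β) :
    Tendsto (cdf α β) (𝓝[>] 0) (𝓝 0) := by
  have hexp : Tendsto (fun x : ℝ => exp (-α * x ^ (-β))) (𝓝[>] 0) (𝓝 0) :=
    tendsto_exp_atBot.comp <|
      (tendsto_rpow_neg_nhdsGT_zero (neg_neg_of_pos hβ)).const_mul_atTop_of_neg (neg_neg_of_pos hα)
  have hlim := hexp.const_mul (exp α)
  rw [mul_zero] at hlim
  refine hlim.congr' ?_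
  filter_upwards [self_mem_nhdsWithin] with x hx using (cdf_eq_exp_mul_exp hx).symm

theorem tendsto_pdf_nhdsGT_zero (hα : 0 < α) (hβ : 0 < β) :
    Tendsto (pdf α β) (𝓝[>] 0) (𝓝 0) := by
  have hdecay := (tendsto_rpow_mul_exp_neg_mul_atTop_nhds_zero ((1 + β) / β) α hα).comp
    (tendsto_rpow_neg_nhdsGT_zero (neg_neg_of_pos hβ))
  have hlim := hdecay.const_mul (α * β * exp α)
  rw [mul_zero] at hlim
  refine hlim.congr' ?_
  filter_upwards [self_mem_nhdsWithin] with x hx using (pdf_eq_rpow_mul_exp hβ hx).symm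

theorem cdf_one : cdf α β 1 = 1 := by simp [cdf]

theorem cdf_lt_one (hα : 0 < α) (hβ : 0 < β) (hx₀ : 0 < x) (hx₁ : x < 1) : cdf α β x < 1 := by
  have : 1 < 1 / x ^ β := one_lt_one_div (rpow_pos_of_pos hx₀ β) (rpow_lt_one hx₀.le hx₁ hβ)
  exact Real.exp_lt_one_iff.mpr (by nlinarith)

theorem continuousAt_cdf_one : ContinuousAt (cdf α β) 1 := by
  unfold cdf
  fun_prop (disch := norm_num)

theorem tendsto_one_sub_cdf_nhdsLT_one (hα : 0 < α) (hβ : 0 < β) :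
    Tendsto (fun x => 1 - cdf α β x) (𝓝[<] 1) (𝓝[>] 0) := by
  refine tendsto_nhdsWithin_iff.mpr ⟨?_, ?_⟩
  · have hlim := (continuousAt_cdf_one (α := α) (β := β)).tendsto.const_sub 1
    rw [cdf_one, sub_self] at hlim
    exact hlim.mono_left nhdsWithin_le_nhds
  · filter_upwards [Ioo_mem_nhdsLT zero_lt_one] with x hx
    exact sub_pos.mpr (cdf_lt_one hα hβ hx.1 hx.2)

theorem continuousAt_pdf_one : ContinuousAt (pdf α β) 1 :=
  (continuousAt_const.mul continuousAt_cdf_one).div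
    (continuousAt_id.rpow_const (Or.inl one_ne_zero)) (by simp)

theorem pdf_one : pdf α β 1 = α * β := by simp [pdf, cdf_one]

theorem tendsto_pdf_nhdsLT_one : Tendsto (pdf α β) (𝓝[<] 1) (𝓝 (α * β)) := by
  simpa [pdf_one] using continuousAt_pdf_one.tendsto.mono_left nhdsWithin_le_nhds

end UnitGompertz

open UnitGompertz in
theorem unitGompertz_hazard_limits (α β : ℝ) (hα : 0 < α) (hβ : 0 < β) :
    let h : ℝ → ℝ := fun x =>
      (α * β * Real.exp (-α * (1 / x ^ β - 1)) / x ^ (1 + β)) /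
        (1 - Real.exp (-α * (1 / x ^ β - 1)))
    Tendsto h (nhdsWithin 0 (Set.Ioi (0:ℝ))) (nhds 0) ∧
    Tendsto h (nhdsWithin 1 (Set.Iio (1:ℝ))) atTop := by
  show Tendsto (fun x => pdf α β x / (1 - cdf α β x)) _ _ ∧
    Tendsto (fun x => pdf α β x / (1 - cdf α β x)) _ _
  constructor
  · have hlim := (tendsto_pdf_nhdsGT_zero hα hβ).div
      ((tendsto_cdf_nhdsGT_zero hα hβ).const_sub 1) (by norm_num)
    rwa [zero_div] at hlim
  · exact tendsto_pdf_nhdsLT_one.div_nhdsGT_zero_atTop (mul_pos hα hβ)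
      (tendsto_one_sub_cdf_nhdsLT_one hα hβ)
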